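/- arXiv:1811.05314 — 5 statements merged into one kernel-verified Lean document; each statement's English description precedes it below -/
import Mathlib

section
/- For integers d ≥ 2 and n ≥ d + 1, every finite simple graph G on n vertices with diameter exactly d has at most d + (n - d - 1)(n - d + 4)/2 edges. -/
/-- For integers `d ≥ 2` and `n ≥ d + 1`, every finite simple graph on `n` vertices with
diameter exactly `d` has at most `d + (n - d - 1)(n - d + 4)/2` edges. -/
theorem ore_max_size_upper_bound {V : Type*} [Fintype V] (G : SimpleGraph V)
    [DecidableRel G.Adj] (n d : ℕ) (hd : 2 ≤ d) (hn : d + 1 ≤ n)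
    (hcard : Fintype.card V = n) (hconn : G.Connected) (hdiam : G.diam = d) :
    G.edgeFinset.card ≤ d + (n - d - 1) * (n - d + 4) / 2 := by
  classical
  have hV : Nonempty V := by
    rw [← Fintype.card_pos_iff]; omega
  obtain ⟨u, v, huv⟩ := G.exists_dist_eq_diam
  rw [hdiam] at huv
  obtain ⟨p, hplen⟩ := hconn.exists_walk_length_eq_dist u v
  rw [huv] at hplen
  set x : ℕ → V := fun i => p.getVert i with hxdef
  have hadjx : ∀ i, i < d → G.Adj (x i) (x (i + 1)) := fun i h =>
    p.adj_getVert_succ (by omega)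
  have hadj1 : ∀ {a b : V}, G.Adj a b → G.dist a b = 1 := fun h =>
    SimpleGraph.dist_eq_one_iff_adj.mpr h
  -- distance from u to x i is at most i
  have hAle : ∀ i, i ≤ d → G.dist u (x i) ≤ i := by
    intro i
    induction i with
    | zero => intro _; simp [hxdef, SimpleGraph.Walk.getVert_zero]
    | succ i ih =>
      intro hi
      calc G.dist u (x (i+1)) ≤ G.dist u (x i) + G.dist (x i) (x (i+1)) :=
            hconn.dist_triangle
        _ ≤ i + 1 := by
            rw [hadj1 (hadjx i (by omega))]
            exact Nat.add_le_add_right (ih (by omega)) 1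
  -- distance from x i to v is at most d - i
  have hBle : ∀ j i, i + j = d → G.dist (x i) v ≤ j := by
    intro j
    induction j with
    | zero =>
      intro i hi
      have hxi : x i = v := by
        have : i = p.length := by omega
        rw [hxdef]; simp only [this, SimpleGraph.Walk.getVert_length]
      rw [hxi]; simp
    | succ j ih =>
      intro i hi
      calc G.dist (x i) v ≤ G.dist (x i) (x (i+1)) + G.dist (x (i+1)) v :=
            hconn.dist_triangle
        _ ≤ 1 + j := by
            rw [hadj1 (hadjx i (by omega))]
            exact Nat.add_le_add_left (ih (i+1) (by omega)) 1
        _ = j + 1 := by omega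
  have hx : ∀ i, i ≤ d → G.dist u (x i) = i := by
    intro i hi
    have h1 := hAle i hi
    have h2 := hBle (d - i) i (by omega)
    have h3 : G.dist u v ≤ G.dist u (x i) + G.dist (x i) v := hconn.dist_triangle
    rw [huv] at h3
    omega
  have hsep : ∀ i j, i ≤ d → j ≤ d → j - i ≤ G.dist (x i) (x j) := by
    intro i j hi hj
    have h3 : G.dist u (x j) ≤ G.dist u (x i) + G.dist (x i) (x j) := hconn.dist_triangle
    rw [hx i hi, hx j hj] at h3
    omega
  have hxinj : ∀ i j, i ≤ d → j ≤ d → x i = x j → i = j := by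
    intro i j hi hj h
    have h1 := hx i hi
    have h2 := hx j hj
    rw [h] at h1; omega
  set S : Finset V := (Finset.range (d+1)).image x with hSdef
  set T : Finset V := Sᶜ with hTdef
  set m : ℕ := n - d - 1 with hmdef
  have hScard : S.card = d + 1 := by
    rw [hSdef, Finset.card_image_of_injOn, Finset.card_range]
    intro i hi j hj hij
    simp only [Finset.coe_range, Set.mem_Iio] at hi hj
    exact hxinj i j (by omega) (by omega) hij
  have hTcard : T.card = m := by
    rw [hTdef, Finset.card_compl, hScard, hcard]
    omega
  -- neighbors on the path of a common vertex are within distance 2 in index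
  have F2 : ∀ (a : V) i j, i ≤ d → j ≤ d → G.Adj a (x i) → G.Adj a (x j) →
      j ≤ i + 2 := by
    intro a i j hi hj h1 h2
    have hda : G.dist (x i) (x j) ≤ G.dist (x i) a + G.dist a (x j) := hconn.dist_triangle
    rw [SimpleGraph.dist_comm (u := x i) (v := a), hadj1 h1, hadj1 h2] at hda
    have := hsep i j hi hj
    omega
  -- the minimal path-neighbor index of a vertex
  set mfun : V → ℕ := fun a =>
    if h : ((Finset.range (d+1)).filter (fun k => G.Adj a (x k))).Nonempty then
      ((Finset.range (d+1)).filter (fun k => G.Adj a (x k))).min' h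
    else 0 with hmfundef
  set X1 : Finset (Sym2 V) := (Finset.range d).image (fun i => s(x i, x (i+1))) with hX1def
  set X2 : Finset (Sym2 V) :=
    T.biUnion (fun a => (Finset.range 3).image (fun j => s(a, x (mfun a + j)))) with hX2def
  set X3 : Finset (Sym2 V) := T.sym2.filter (fun e => ¬ e.IsDiag) with hX3def
  -- edges with one endpoint outside S and the other on the path lie in X2
  have hcase2 : ∀ (a : V) i, a ∈ T → i ≤ d → G.Adj a (x i) → s(a, x i) ∈ X2 := by
    intro a i haT hi hadj
    have hiN0 : i ∈ (Finset.range (d+1)).filter (fun k => G.Adj a (x k)) := by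
      simp only [Finset.mem_filter, Finset.mem_range]
      exact ⟨by omega, hadj⟩
    have hNne : ((Finset.range (d+1)).filter (fun k => G.Adj a (x k))).Nonempty := ⟨i, hiN0⟩
    have hmf : mfun a = ((Finset.range (d+1)).filter (fun k => G.Adj a (x k))).min' hNne := by
      rw [hmfundef]; exact dif_pos hNne
    have hmem := ((Finset.range (d+1)).filter (fun k => G.Adj a (x k))).min'_mem hNne
    simp only [Finset.mem_filter, Finset.mem_range] at hmem
    have hiN : i ∈ (Finset.range (d+1)).filter (fun k => G.Adj a (x k)) := by
      simp only [Finset.mem_filter, Finset.mem_range]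
      exact ⟨by omega, hadj⟩
    have hle : mfun a ≤ i := by
      rw [hmf]
      exact Finset.min'_le _ i hiN
    rw [← hmf] at hmem
    have hub : i ≤ mfun a + 2 := F2 a (mfun a) i (by omega) hi hmem.2 hadj
    rw [hX2def]
    rw [Finset.mem_biUnion]
    refine ⟨a, haT, ?_⟩
    rw [Finset.mem_image]
    refine ⟨i - mfun a, Finset.mem_range.mpr (by omega), ?_⟩
    have : mfun a + (i - mfun a) = i := by omega
    rw [this]
  -- every edge is in X1 ∪ X2 ∪ X3
  have hsub : G.edgeFinset ⊆ X1 ∪ X2 ∪ X3 := by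
    intro e he
    rw [SimpleGraph.mem_edgeFinset] at he
    induction e with
    | _ a b =>
      have hab : G.Adj a b := he
      by_cases haS : a ∈ S <;> by_cases hbS : b ∈ S
      · -- both on the path
        rw [hSdef, Finset.mem_image] at haS hbS
        obtain ⟨i, hi, hia⟩ := haS
        obtain ⟨j, hj, hjb⟩ := hbS
        rw [Finset.mem_range] at hi hj
        rw [← hia, ← hjb] at hab
        have hdist := hadj1 hab
        have h1 := hsep i j (by omega) (by omega)
        have h2 := hsep j i (by omega) (by omega)
        rw [SimpleGraph.dist_comm] at h2
        have hne : i ≠ j := by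
          intro h; rw [h] at hab; exact G.irrefl hab
        have hij : j = i + 1 ∨ i = j + 1 := by omega
        rw [Finset.mem_union, Finset.mem_union]
        left; left
        rw [hX1def, Finset.mem_image]
        rcases hij with h | h
        · exact ⟨i, Finset.mem_range.mpr (by omega), by rw [hia, ← h, hjb]⟩
        · refine ⟨j, Finset.mem_range.mpr (by omega), ?_⟩
          rw [hjb, ← h, hia, Sym2.eq_swap]
      · -- a on path, b outside
        rw [hSdef, Finset.mem_image] at haS
        obtain ⟨i, hi, hia⟩ := haS
        rw [Finset.mem_range] at hi
        have hbT : b ∈ T := by rw [hTdef, Finset.mem_compl]; exact hbS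
        have := hcase2 b i hbT (by omega) (by rw [hia]; exact hab.symm)
        rw [Finset.mem_union, Finset.mem_union]
        left; right
        rw [← hia, Sym2.eq_swap]
        exact this
      · -- b on path, a outside
        rw [hSdef, Finset.mem_image] at hbS
        obtain ⟨i, hi, hib⟩ := hbS
        rw [Finset.mem_range] at hi
        have haT : a ∈ T := by rw [hTdef, Finset.mem_compl]; exact haS
        have := hcase2 a i haT (by omega) (by rw [hib]; exact hab)
        rw [Finset.mem_union, Finset.mem_union]
        left; right
        rw [← hib]
        exact this
      · -- both outside
        rw [Finset.mem_union]
        right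
        rw [hX3def, Finset.mem_filter]
        constructor
        · rw [Finset.mk_mem_sym2_iff, hTdef, Finset.mem_compl, Finset.mem_compl]
          exact ⟨haS, hbS⟩
        · rw [Sym2.mk_isDiag_iff]
          exact hab.ne
  -- cardinality bounds
  have hc1 : X1.card ≤ d := by
    rw [hX1def]
    exact (Finset.card_image_le).trans (by rw [Finset.card_range])
  have hc2 : X2.card ≤ m * 3 := by
    rw [hX2def, ← hTcard]
    exact Finset.card_biUnion_le_card_mul _ _ 3 (fun a _ =>
      (Finset.card_image_le).trans (by rw [Finset.card_range]))
  have hc3 : X3.card ≤ (m+1) * m / 2 - m := by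
    have htot : T.sym2.card = (m+1) * m / 2 := by
      rw [Finset.card_sym2, hTcard, Nat.choose_two_right]
      congr 1
    have hsplit := Finset.card_filter_add_card_filter_not
      (s := T.sym2) (p := fun e => e.IsDiag)
    have hdiag : m ≤ (T.sym2.filter (fun e => e.IsDiag)).card := by
      have himg : T.image (fun a => s(a,a)) ⊆ T.sym2.filter (fun e => e.IsDiag) := by
        intro e he
        rw [Finset.mem_image] at he
        obtain ⟨a, ha, rfl⟩ := he
        rw [Finset.mem_filter]
        exact ⟨Finset.mk_mem_sym2_iff.mpr ⟨ha, ha⟩, Sym2.mk_isDiag_iff.mpr rfl⟩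
      have hinj : (T.image (fun a => s(a,a))).card = m := by
        rw [Finset.card_image_of_injective _ (fun a b h => by
          simpa using h), hTcard]
      rw [← hinj]
      exact Finset.card_le_card himg
    rw [hX3def]
    omega
  -- put it together
  have hfinal : G.edgeFinset.card ≤ d + m * 3 + ((m+1) * m / 2 - m) := by
    calc G.edgeFinset.card ≤ (X1 ∪ X2 ∪ X3).card := Finset.card_le_card hsub
      _ ≤ (X1 ∪ X2).card + X3.card := Finset.card_union_le _ _
      _ ≤ X1.card + X2.card + X3.card := by
          have := Finset.card_union_le X1 X2; omega
      _ ≤ d + m * 3 + ((m+1) * m / 2 - m) := by omega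
  have hrw : n - d + 4 = m + 5 := by omega
  rw [hrw]
  have h1 : (m+1) * m = m * (m+1) := Nat.mul_comm _ _
  have h2 : m * (m+5) = m * (m+1) + 4 * m := by ring
  obtain ⟨k, hk⟩ := Nat.even_mul_succ_self m
  have h4 : m * 2 ≤ m * (m+1) := by nlinarith
  rw [hk] at h4
  rw [h1, hk] at hfinal
  rw [hmdef] at h2 hk ⊢
  rw [h2, hk]
  omega
end

section
/- For integers d ≥ 2 and n ≥ d + 1, there exists a finite simple graph G on n vertices with diameter exactly d whose number of edges equals d + (n - d - 1)(n - d + 4)/2; namely, take a path P with d+1 vertices v_0, v_1, ..., v_d, make the remaining n - d - 1 vertices pairwise adjacent, and join each of them to the three vertices v_0, v_1, v_2 of P. This graph has diameter d and exactly d + (n - d - 1)(n - d + 4)/2 edges. -/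
/-! Every clique vertex is adjacent to `v_0, v_1, v_2`, so it reaches `v_j` in at most
`1 + (j - 2) ≤ d` steps, and two path vertices are at distance at most `d` along the path.
Conversely, the potential sending `v_i` to `i` and every clique vertex to `1` grows by at most
one along each edge, so `v_0` and `v_d` are at distance `d`. Counting each edge at its larger
endpoint, `v_i` contributes one edge for `i ≥ 1` and the `j`-th clique vertex contributes `3 + j`,
so there are `d + 3k + k(k - 1)/2` edges, where `k = n - d - 1`. -/

/-- The extremal graph on `Fin n`: the vertices `0, 1, ..., d` form a path
`v_0 v_1 ⋯ v_d`, the remaining `n - d - 1` vertices are pairwise adjacent,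
and each of them is joined to the three vertices `v_0, v_1, v_2` of the path. -/
def oreExtremalGraph (n d : ℕ) : SimpleGraph (Fin n) where
  Adj a b := a ≠ b ∧
    ((a.val + 1 = b.val ∧ b.val ≤ d) ∨ (b.val + 1 = a.val ∧ a.val ≤ d) ∨
     (d < a.val ∧ d < b.val) ∨
     (d < a.val ∧ b.val ≤ 2) ∨ (d < b.val ∧ a.val ≤ 2))
  symm := by
    constructor
    intro a b h
    exact ⟨h.1.symm, by tauto⟩
  loopless := by
    constructor
    intro a h
    exact h.1 rfl

instance (n d : ℕ) : DecidableRel (oreExtremalGraph n d).Adj :=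
  fun _ _ => instDecidableAnd

open Finset

namespace SimpleGraph

variable {V : Type*} {G : SimpleGraph V}

theorem card_edgeFinset_eq_sum_card_lt [Fintype V] [LinearOrder V] (G : SimpleGraph V)
    [DecidableRel G.Adj] : #G.edgeFinset = ∑ v, #{u | u < v ∧ G.Adj u v} := by
  have hdeg (v : V) :
      G.degree v = #{u | u < v ∧ G.Adj u v} + #{u | v < u ∧ G.Adj v u} := by
    rw [← card_neighborFinset_eq_degree,
      ← card_union_of_disjoint (disjoint_filter.2 fun u _ h h' => (h.1.trans h'.1).false)]
    congr 1
    ext u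
    simp only [mem_neighborFinset, mem_union, mem_filter, mem_univ, true_and]
    refine ⟨fun h => (lt_or_gt_of_ne h.ne.symm).imp (⟨·, h.symm⟩) (⟨·, h⟩), ?_⟩
    rintro (h | h)
    exacts [h.2.symm, h.2]
  have hswap : ∑ v, #{u | v < u ∧ G.Adj v u} = ∑ v, #{u | u < v ∧ G.Adj u v} := by
    simp only [card_filter]
    exact sum_comm
  have hsum := G.sum_degrees_eq_twice_card_edges
  simp only [hdeg, sum_add_distrib, hswap] at hsum
  omega

theorem Walk.apply_le_apply_add_length {f : V → ℕ} (hf : ∀ a b, G.Adj a b → f b ≤ f a + 1)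
    {u v : V} (w : G.Walk u v) : f v ≤ f u + w.length := by
  induction w with
  | nil => simp
  | cons h _ ih =>
    have hstep := hf _ _ h
    rw [Walk.length_cons]
    omega

theorem sub_le_edist_of_adj {f : V → ℕ} (hf : ∀ a b, G.Adj a b → f b ≤ f a + 1) (u v : V) :
    ((f v - f u : ℕ) : ℕ∞) ≤ G.edist u v := by
  rw [edist_eq_sInf]
  refine le_sInf (Set.forall_mem_range.2 fun w => ?_)
  have hw := w.apply_le_apply_add_length hf
  exact_mod_cast (by omega : f v - f u ≤ w.length)

end SimpleGraph

namespace OreExtremalGraph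

open SimpleGraph

variable {n d : ℕ}

lemma edist_le_one {u v : Fin n}
    (h : (u : ℕ) + 1 = v ∧ (v : ℕ) ≤ d ∨ d < u ∧ (d < v ∨ (v : ℕ) ≤ 2)) :
    (oreExtremalGraph n d).edist u v ≤ 1 := by
  rw [edist_le_one_iff_adj_or_eq]
  by_cases huv : u = v
  · exact .inr huv
  · exact .inl ⟨huv, by omega⟩

lemma edist_le_sub (hdn : d < n) {i j : ℕ} (hij : i ≤ j) (hj : j ≤ d) :
    (oreExtremalGraph n d).edist ⟨i, by omega⟩ ⟨j, by omega⟩ ≤ (j - i : ℕ) := by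
  induction j, hij using Nat.le_induction with
  | base => simp
  | succ j hij ih =>
    calc (oreExtremalGraph n d).edist ⟨i, _⟩ ⟨j + 1, _⟩
        ≤ (oreExtremalGraph n d).edist ⟨i, _⟩ ⟨j, by omega⟩ +
            (oreExtremalGraph n d).edist ⟨j, by omega⟩ ⟨j + 1, _⟩ :=
          (oreExtremalGraph n d).edist_triangle
      _ ≤ (j - i : ℕ) + 1 := add_le_add (ih (by omega)) (edist_le_one (.inl ⟨rfl, hj⟩))
      _ = (j + 1 - i : ℕ) := by rw [Nat.sub_add_comm hij]; push_cast; rfl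

lemma edist_le_of_lt (hd : 2 ≤ d) {u : Fin n} (hu : d < u) (v : Fin n) :
    (oreExtremalGraph n d).edist u v ≤ d := by
  by_cases hv : d < v ∨ (v : ℕ) ≤ 2
  · exact (edist_le_one (.inr ⟨hu, hv⟩)).trans (by exact_mod_cast (by omega : 1 ≤ d))
  push Not at hv
  calc (oreExtremalGraph n d).edist u v
      ≤ (oreExtremalGraph n d).edist u ⟨2, by omega⟩ +
          (oreExtremalGraph n d).edist ⟨2, by omega⟩ v :=
        (oreExtremalGraph n d).edist_triangle
    _ ≤ 1 + (v - 2 : ℕ) :=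
        add_le_add (edist_le_one (.inr ⟨hu, .inr le_rfl⟩)) (edist_le_sub (by omega) hv.2.le hv.1)
    _ ≤ d := by norm_cast; omega

lemma ediam_le (hd : 2 ≤ d) (hdn : d < n) : (oreExtremalGraph n d).ediam ≤ d := by
  refine ediam_le_of_edist_le fun u v => ?_
  rcases lt_or_ge d u with hu | hu
  · exact edist_le_of_lt hd hu v
  rcases lt_or_ge d v with hv | hv
  · rw [SimpleGraph.edist_comm]
    exact edist_le_of_lt hd hv u
  rcases le_total (u : ℕ) v with huv | hvu
  · exact (edist_le_sub hdn huv hv).trans (by exact_mod_cast (by omega : (v : ℕ) - u ≤ d))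
  · rw [SimpleGraph.edist_comm]
    exact (edist_le_sub hdn hvu hu).trans (by exact_mod_cast (by omega : (u : ℕ) - v ≤ d))

lemma le_edist_ends (hdn : d < n) :
    (d : ℕ∞) ≤ (oreExtremalGraph n d).edist ⟨0, by omega⟩ ⟨d, hdn⟩ := by
  have hpot := sub_le_edist_of_adj (G := oreExtremalGraph n d)
    (f := fun v => if (v : ℕ) ≤ d then v else 1)
    (by rintro a b ⟨-, h⟩; split_ifs <;> omega) ⟨0, by omega⟩ ⟨d, hdn⟩
  simpa using hpot

lemma ediam_eq (hd : 2 ≤ d) (hdn : d < n) : (oreExtremalGraph n d).ediam = d :=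
  (ediam_le hd hdn).antisymm ((le_edist_ends hdn).trans edist_le_ediam)

lemma card_filter_lt_and_adj (hd : 2 ≤ d) (v : Fin n) :
    #{u | u < v ∧ (oreExtremalGraph n d).Adj u v} =
      if (v : ℕ) = 0 then 0 else if (v : ℕ) ≤ d then 1 else v - d + 2 := by
  split_ifs with h0 hv
  · simp [Fin.lt_def, h0]
  · rw [card_eq_one]
    refine ⟨⟨v - 1, by omega⟩, ?_⟩
    ext u
    simp only [oreExtremalGraph, mem_filter, mem_univ, true_and, mem_singleton, Fin.lt_def,
      Fin.ext_iff]
    omega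
  · rw [← card_map Fin.valEmbedding]
    have : (univ.filter fun u => u < v ∧ (oreExtremalGraph n d).Adj u v).map Fin.valEmbedding =
        range 3 ∪ Ioo d v := by
      ext j
      simp only [oreExtremalGraph, mem_map, mem_filter, mem_univ, true_and,
        Fin.valEmbedding_apply, mem_union, mem_range, mem_Ioo, Fin.lt_def, ne_eq]
      constructor
      · rintro ⟨u, h, rfl⟩; omega
      · intro h; exact ⟨⟨j, by omega⟩, by simp only [Fin.ext_iff]; omega, rfl⟩
    rw [this, card_union_of_disjoint (disjoint_left.2 fun j h h' => by simp at h h'; omega)]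
    simp only [card_range, Nat.card_Ioo]
    omega

lemma card_edgeFinset (hd : 2 ≤ d) (hdn : d < n) :
    #(oreExtremalGraph n d).edgeFinset = d + (n - d - 1) * (n - d + 4) / 2 := by
  obtain ⟨k, rfl⟩ : ∃ k, n = d + 1 + k := ⟨n - d - 1, by omega⟩
  rw [card_edgeFinset_eq_sum_card_lt, sum_congr rfl fun v _ => card_filter_lt_and_adj hd v,
    Fin.sum_univ_eq_sum_range (fun i => if i = 0 then 0 else if i ≤ d then 1 else i - d + 2),
    sum_range_add, sum_range_succ']
  have hpath : ∑ i ∈ range d,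
      (if i + 1 = 0 then 0 else if i + 1 ≤ d then 1 else i + 1 - d + 2) = ∑ i ∈ range d, 1 :=
    sum_congr rfl fun i hi => by simp only [mem_range] at hi; simp [hi]
  have hclique : ∑ x ∈ range k,
      (if d + 1 + x = 0 then 0 else if d + 1 + x ≤ d then 1 else d + 1 + x - d + 2) =
        ∑ x ∈ range k, (x + 3) :=
    sum_congr rfl fun x _ => by rw [if_neg (by omega), if_neg (by omega)]; omega
  have hgauss := sum_range_id_mul_two k
  have hexpand : k * (k + 5) = k * (k - 1) + 6 * k := by cases k <;> simp; ring
  simp only [hpath, hclique, sum_add_distrib, sum_const, card_range]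
  rw [show d + 1 + k - d - 1 = k by omega, show d + 1 + k - d + 4 = k + 5 by omega]
  simp only [smul_eq_mul, mul_one, ↓reduceIte, add_zero]
  omega

end OreExtremalGraph

/-- For integers `d ≥ 2` and `n ≥ d + 1`, the graph `oreExtremalGraph n d`
(a path of length `d` together with `n - d - 1` pairwise adjacent vertices each
joined to the first three vertices of the path) is a finite simple graph on `n`
vertices with diameter exactly `d` and exactly `d + (n - d - 1)(n - d + 4)/2` edges. -/
theorem ore_max_size_attained (n d : ℕ) (hd : 2 ≤ d) (hn : d + 1 ≤ n) :
    Fintype.card (Fin n) = n ∧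
    (oreExtremalGraph n d).Connected ∧
    (oreExtremalGraph n d).diam = d ∧
    (oreExtremalGraph n d).edgeFinset.card = d + (n - d - 1) * (n - d + 4) / 2 := by
  have hdiam := OreExtremalGraph.ediam_eq hd hn
  have : Nonempty (Fin n) := ⟨⟨0, by omega⟩⟩
  exact ⟨Fintype.card_fin n, SimpleGraph.connected_of_ediam_ne_top (by simp [hdiam]),
    by simp [SimpleGraph.diam, hdiam], OreExtremalGraph.card_edgeFinset hd hn⟩
end

section
/- Let d ≥ 2 and n ≥ d + 1 be integers, and let G be a finite simple graph on n vertices with diameter exactly d having exactly d + (n - d - 1)(n - d + 4)/2 edges. Then G consists of a path P of length d together with n - d - 1 further vertices that form a clique, and there exist three or four consecutive vertices on P such that every vertex outside P is adjacent to exactly the first three or exactly the last three of these consecutive vertices (and to no other vertices of P). -/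
open Finset

private lemma ore_card_filter_prod {α β : Type*} [Fintype α] [Fintype β]
    (Q : α → β → Prop) [∀ a b, Decidable (Q a b)] :
    (Finset.univ.filter (fun p : α × β => Q p.1 p.2)).card
      = ∑ a : α, (Finset.univ.filter (fun b => Q a b)).card := by
  rw [Finset.card_filter, ← Finset.univ_product_univ, Finset.sum_product]
  simp only [Finset.card_filter]

private lemma ore_split {α : Type*} (s : Finset α) (p q : α → Prop)
    [DecidablePred p] [DecidablePred q] :
    s.card = (s.filter (fun a => p a ∧ q a)).card + (s.filter (fun a => p a ∧ ¬ q a)).card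
      + ((s.filter (fun a => ¬ p a ∧ q a)).card
        + (s.filter (fun a => ¬ p a ∧ ¬ q a)).card) := by
  simp only [Finset.card_filter, ← Finset.sum_add_distrib]
  rw [Finset.card_eq_sum_ones]
  apply Finset.sum_congr rfl
  intro a _
  by_cases hp : p a <;> by_cases hq : q a <;> simp [hp, hq]

private lemma ore_T_card (d : ℕ) :
    ((Finset.univ : Finset (Fin (d+1) × Fin (d+1))).filter
      (fun q => q.1.val + 1 = q.2.val ∨ q.2.val + 1 = q.1.val)).card = 2 * d := by
  rw [Finset.filter_or, Finset.card_union_of_disjoint]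
  · have h1 : ((Finset.univ : Finset (Fin (d+1) × Fin (d+1))).filter
        (fun q => q.1.val + 1 = q.2.val))
        = Finset.univ.image (fun i : Fin d =>
            ((⟨i.val, by omega⟩ : Fin (d+1)), (⟨i.val+1, by omega⟩ : Fin (d+1)))) := by
      ext ⟨a, b⟩
      simp only [Finset.mem_filter, Finset.mem_univ, true_and, Finset.mem_image]
      constructor
      · intro h
        have hb := b.isLt
        refine ⟨⟨a.val, by omega⟩, ?_⟩
        simp [Prod.ext_iff, Fin.ext_iff, h]
      · rintro ⟨i, hi⟩
        rw [Prod.mk.injEq] at hi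
        obtain ⟨h1, h2⟩ := hi
        rw [← h1, ← h2]
    have h2 : ((Finset.univ : Finset (Fin (d+1) × Fin (d+1))).filter
        (fun q => q.2.val + 1 = q.1.val))
        = Finset.univ.image (fun i : Fin d =>
            ((⟨i.val+1, by omega⟩ : Fin (d+1)), (⟨i.val, by omega⟩ : Fin (d+1)))) := by
      ext ⟨a, b⟩
      simp only [Finset.mem_filter, Finset.mem_univ, true_and, Finset.mem_image]
      constructor
      · intro h
        have ha := a.isLt
        refine ⟨⟨b.val, by omega⟩, ?_⟩
        simp [Prod.ext_iff, Fin.ext_iff, h]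
      · rintro ⟨i, hi⟩
        rw [Prod.mk.injEq] at hi
        obtain ⟨h1, h2⟩ := hi
        rw [← h1, ← h2]
    rw [h1, h2, Finset.card_image_of_injective, Finset.card_image_of_injective]
    · simp; omega
    · intro i j h
      rw [Prod.ext_iff] at h
      exact Fin.ext (by simpa [Fin.ext_iff] using h.2)
    · intro i j h
      rw [Prod.ext_iff] at h
      exact Fin.ext (by simpa [Fin.ext_iff] using h.1)
  · rw [Finset.disjoint_left]
    intro q hq hq'
    simp only [Finset.mem_filter] at hq hq'
    omega

/-- Let `d ≥ 2` and `n ≥ d + 1` be integers, and let `G` be a finite simple graph on `n`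
vertices with diameter exactly `d` having exactly `d + (n - d - 1)(n - d + 4)/2` edges.
Then `G` consists of a path `P` of length `d` (the edges among the vertices of `P` being
exactly the path edges) together with `n - d - 1` further vertices that form a clique,
and there exist three or four consecutive vertices on `P` such that every vertex outside
`P` is adjacent to exactly the first three or exactly the last three of these consecutive
vertices (and to no other vertices of `P`). -/
theorem ore_extremal_characterization {V : Type*} [Fintype V] (G : SimpleGraph V)
    [DecidableRel G.Adj] (n d : ℕ) (hd : 2 ≤ d) (hn : d + 1 ≤ n)
    (hcard : Fintype.card V = n) (hconn : G.Connected) (hdiam : G.diam = d)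
    (hsize : G.edgeFinset.card = d + (n - d - 1) * (n - d + 4) / 2) :
    ∃ v : Fin (d + 1) → V, Function.Injective v ∧
      -- the edges among the vertices of `P` are exactly the `d` edges of the path
      (∀ j k : Fin (d + 1), G.Adj (v j) (v k) ↔ (j.val + 1 = k.val ∨ k.val + 1 = j.val)) ∧
      -- the vertices outside `P` form a clique
      (∀ u w : V, (∀ k, u ≠ v k) → (∀ k, w ≠ v k) → u ≠ w → G.Adj u w) ∧
      -- three or four consecutive vertices of `P`: each outside vertex is adjacent to
      -- exactly the first three or exactly the last three of them
      (∃ i : ℕ,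
        (i + 2 ≤ d ∧ ∀ u : V, (∀ k, u ≠ v k) →
          ∀ j : Fin (d + 1),
            (G.Adj u (v j) ↔ (j.val = i ∨ j.val = i + 1 ∨ j.val = i + 2))) ∨
        (i + 3 ≤ d ∧ ∀ u : V, (∀ k, u ≠ v k) →
          ((∀ j : Fin (d + 1),
              G.Adj u (v j) ↔ (j.val = i ∨ j.val = i + 1 ∨ j.val = i + 2)) ∨
           (∀ j : Fin (d + 1),
              G.Adj u (v j) ↔ (j.val = i + 1 ∨ j.val = i + 2 ∨ j.val = i + 3))))) := by
  classical
  have hV : Nonempty V := Fintype.card_pos_iff.mp (by omega)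
  obtain ⟨u, w, huw⟩ := G.exists_dist_eq_diam
  rw [hdiam] at huw
  obtain ⟨p, hpath, hlen⟩ := hconn.exists_path_of_dist u w
  have hplen : p.length = d := by rw [hlen, huw]
  have hle : ∀ a k : ℕ, a + k ≤ d → G.dist (p.getVert a) (p.getVert (a + k)) ≤ k := by
    intro a k
    induction k with
    | zero => intro _; simp [SimpleGraph.dist_self]
    | succ k ih =>
      intro h
      have hadj : G.Adj (p.getVert (a + k)) (p.getVert (a + k + 1)) :=
        p.adj_getVert_succ (by rw [hplen]; omega)
      have h1 := ih (by omega)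
      have h2 : G.dist (p.getVert (a + k)) (p.getVert (a + k + 1)) = 1 :=
        SimpleGraph.dist_eq_one_iff_adj.mpr hadj
      have h3 := hconn.dist_triangle (u := p.getVert a) (v := p.getVert (a + k))
        (w := p.getVert (a + k + 1))
      have : a + (k + 1) = a + k + 1 := by omega
      rw [this]
      omega
  have hdist : ∀ a b : ℕ, a ≤ b → b ≤ d → G.dist (p.getVert a) (p.getVert b) = b - a := by
    intro a b hab hbd
    have hub : G.dist (p.getVert a) (p.getVert b) ≤ b - a := by
      have := hle a (b - a) (by omega)
      rwa [show a + (b - a) = b by omega] at this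
    have h1 : G.dist u (p.getVert a) ≤ a := by
      have := hle 0 a (by omega)
      rwa [Nat.zero_add, p.getVert_zero] at this
    have h2 : G.dist (p.getVert b) w ≤ d - b := by
      have hgv : p.getVert d = w := by rw [← hplen]; exact p.getVert_length
      have := hle b (d - b) (by omega)
      rwa [show b + (d - b) = d by omega, hgv] at this
    have t1 := hconn.dist_triangle (u := u) (v := p.getVert b) (w := w)
    have t2 := hconn.dist_triangle (u := u) (v := p.getVert a) (w := p.getVert b)
    omega
  set v : Fin (d + 1) → V := fun j => p.getVert j.val with hvdef
  have hdv : ∀ j k : Fin (d+1), j.val ≤ k.val → G.dist (v j) (v k) = k.val - j.val :=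
    fun j k h => hdist j.val k.val h (by omega)
  have hinj : Function.Injective v := by
    intro j k h
    rcases le_total j.val k.val with hh | hh
    · have := hdv j k hh; rw [h, SimpleGraph.dist_self] at this
      exact Fin.ext (by omega)
    · have := hdv k j hh; rw [h, SimpleGraph.dist_self] at this
      exact Fin.ext (by omega)
  have hadjP : ∀ j k : Fin (d+1),
      G.Adj (v j) (v k) ↔ (j.val + 1 = k.val ∨ k.val + 1 = j.val) := by
    intro j k
    constructor
    · intro h
      have h1 : G.dist (v j) (v k) = 1 := SimpleGraph.dist_eq_one_iff_adj.mpr h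
      rcases le_total j.val k.val with hh | hh
      · have := hdv j k hh; omega
      · have := hdv k j hh; rw [SimpleGraph.dist_comm] at h1; omega
    · intro h
      rcases h with h | h
      · exact SimpleGraph.dist_eq_one_iff_adj.mp (by rw [hdv j k (by omega)]; omega)
      · exact (SimpleGraph.dist_eq_one_iff_adj.mp (by rw [hdv k j (by omega)]; omega)).symm
  set P : Finset V := Finset.univ.image v with hPdef
  have hmemP : ∀ x : V, x ∈ P ↔ ∃ k, v k = x := by
    intro x; simp [hPdef]
  have hPcard : P.card = d + 1 := by
    rw [hPdef, Finset.card_image_of_injective _ hinj, Finset.card_univ, Fintype.card_fin]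
  set m : ℕ := n - d - 1 with hmdef
  have hOcard : Pᶜ.card = m := by
    rw [Finset.card_compl, hPcard, hcard]
    omega
  set N : V → Finset (Fin (d+1)) := fun x => Finset.univ.filter (fun k => G.Adj x (v k))
    with hNdef
  have hNmem : ∀ (x : V) (k : Fin (d+1)), k ∈ N x ↔ G.Adj x (v k) := by
    intro x k; simp [hNdef]
  have hspread : ∀ x : V, ∀ j ∈ N x, ∀ k ∈ N x, k.val ≤ j.val + 2 := by
    intro x j hj k hk
    rcases le_total k.val j.val with hh | hh
    · omega
    · have t := hconn.dist_triangle (u := v j) (v := x) (w := v k)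
      have e1 : G.dist (v j) x = 1 :=
        SimpleGraph.dist_eq_one_iff_adj.mpr ((hNmem x j).mp hj).symm
      have e2 : G.dist x (v k) = 1 :=
        SimpleGraph.dist_eq_one_iff_adj.mpr ((hNmem x k).mp hk)
      have := hdv j k hh
      omega
  have hNle3 : ∀ x : V, (N x).card ≤ 3 := by
    intro x
    rcases Finset.eq_empty_or_nonempty (N x) with he | hne
    · simp [he]
    · have hsub : N x ⊆ Finset.Icc ((N x).min' hne) ((N x).max' hne) := by
        intro k hk
        rw [Finset.mem_Icc]
        exact ⟨Finset.min'_le _ _ hk, Finset.le_max' _ _ hk⟩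
      have hcard' := Finset.card_le_card hsub
      rw [Fin.card_Icc] at hcard'
      have hsp := hspread x _ ((N x).min'_mem hne) _ ((N x).max'_mem hne)
      omega
  have hwin : ∀ x : V, (N x).card = 3 → ∃ i : ℕ, i + 2 ≤ d ∧
      ∀ j : Fin (d+1), (j ∈ N x ↔ (j.val = i ∨ j.val = i + 1 ∨ j.val = i + 2)) := by
    intro x hx3
    have hne : (N x).Nonempty := Finset.card_pos.mp (by omega)
    set a := (N x).min' hne with hadef
    set b := (N x).max' hne with hbdef
    have hsub : N x ⊆ Finset.Icc a b := by
      intro k hk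
      rw [Finset.mem_Icc]
      exact ⟨Finset.min'_le _ _ hk, Finset.le_max' _ _ hk⟩
    have hab : b.val ≤ a.val + 2 := hspread x a ((N x).min'_mem hne) b ((N x).max'_mem hne)
    have hcard' : 3 ≤ (Finset.Icc a b).card := by
      rw [← hx3]; exact Finset.card_le_card hsub
    rw [Fin.card_Icc] at hcard'
    have heq : N x = Finset.Icc a b :=
      Finset.eq_of_subset_of_card_le hsub (by rw [Fin.card_Icc, hx3]; omega)
    have hbd := b.isLt
    refine ⟨a.val, by omega, ?_⟩
    intro j
    rw [heq, Finset.mem_Icc, Fin.le_def, Fin.le_def]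
    omega
  -- counting
  set S : Finset (V × V) := Finset.univ.filter (fun q => G.Adj q.1 q.2) with hSdef
  have h2E : 2 * G.edgeFinset.card = S.card := G.two_mul_card_edgeFinset
  set B : V → Finset V := fun x => Finset.univ.filter (fun y => G.Adj x y ∧ ¬ y ∈ P)
    with hBdef
  have hsplit : S.card = (S.filter (fun q : V × V => q.1 ∈ P ∧ q.2 ∈ P)).card
      + (S.filter (fun q : V × V => q.1 ∈ P ∧ ¬ q.2 ∈ P)).card
      + ((S.filter (fun q : V × V => ¬ q.1 ∈ P ∧ q.2 ∈ P)).card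
        + (S.filter (fun q : V × V => ¬ q.1 ∈ P ∧ ¬ q.2 ∈ P)).card) :=
    ore_split S (fun q : V × V => q.1 ∈ P) (fun q : V × V => q.2 ∈ P)
  have hS1 : (S.filter (fun q : V × V => q.1 ∈ P ∧ q.2 ∈ P)).card = 2 * d := by
    have himg : S.filter (fun q : V × V => q.1 ∈ P ∧ q.2 ∈ P)
        = ((Finset.univ : Finset (Fin (d+1) × Fin (d+1))).filter
            (fun q => q.1.val + 1 = q.2.val ∨ q.2.val + 1 = q.1.val)).image
          (fun q => (v q.1, v q.2)) := by
      ext ⟨x, y⟩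
      simp only [hSdef, Finset.mem_filter, Finset.mem_univ, true_and, Finset.mem_image]
      constructor
      · rintro ⟨hadj, hx, hy⟩
        obtain ⟨j, hj⟩ := (hmemP x).mp hx
        obtain ⟨k, hk⟩ := (hmemP y).mp hy
        refine ⟨(j, k), ?_, by simp [hj, hk]⟩
        exact (hadjP j k).mp (by rw [hj, hk]; exact hadj)
      · rintro ⟨⟨j, k⟩, hcond, heq⟩
        rw [Prod.mk.injEq] at heq
        obtain ⟨h1, h2⟩ := heq
        rw [← h1, ← h2]
        exact ⟨(hadjP j k).mpr hcond, (hmemP _).mpr ⟨j, rfl⟩, (hmemP _).mpr ⟨k, rfl⟩⟩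
    rw [himg, Finset.card_image_of_injective, ore_T_card]
    intro q r h
    rw [Prod.ext_iff] at h
    exact Prod.ext (hinj h.1) (hinj h.2)
  have hswap : (S.filter (fun q : V × V => q.1 ∈ P ∧ ¬ q.2 ∈ P)).card
      = (S.filter (fun q : V × V => ¬ q.1 ∈ P ∧ q.2 ∈ P)).card := by
    apply Finset.card_bij (fun q _ => Prod.swap q)
    · intro q hq
      simp only [hSdef, Finset.mem_filter, Finset.mem_univ, true_and] at hq ⊢
      exact ⟨hq.1.symm, hq.2.2, hq.2.1⟩
    · intro a _ b _ h
      exact Prod.swap_injective h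
    · intro q hq
      refine ⟨Prod.swap q, ?_, Prod.swap_swap q⟩
      simp only [hSdef, Finset.mem_filter, Finset.mem_univ, true_and] at hq ⊢
      exact ⟨hq.1.symm, hq.2.2, hq.2.1⟩
  have hS3 : (S.filter (fun q : V × V => ¬ q.1 ∈ P ∧ q.2 ∈ P)).card
      = ∑ x ∈ Pᶜ, (N x).card := by
    have h0 : S.filter (fun q : V × V => ¬ q.1 ∈ P ∧ q.2 ∈ P)
        = Finset.univ.filter (fun q : V × V => G.Adj q.1 q.2 ∧ ¬ q.1 ∈ P ∧ q.2 ∈ P) := by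
      rw [hSdef, Finset.filter_filter]
    rw [h0, ore_card_filter_prod (fun x y => G.Adj x y ∧ ¬ x ∈ P ∧ y ∈ P)]
    rw [← Finset.sum_subset (Finset.subset_univ Pᶜ) ?_]
    · apply Finset.sum_congr rfl
      intro x hx
      have hxP : ¬ x ∈ P := Finset.mem_compl.mp hx
      have himg : Finset.univ.filter (fun y => G.Adj x y ∧ ¬ x ∈ P ∧ y ∈ P)
          = (N x).image v := by
        ext y
        simp only [Finset.mem_filter, Finset.mem_univ, true_and, Finset.mem_image]
        constructor
        · rintro ⟨ha, -, hy⟩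
          obtain ⟨k, hk⟩ := (hmemP y).mp hy
          exact ⟨k, (hNmem x k).mpr (by rw [hk]; exact ha), hk⟩
        · rintro ⟨k, hk, rfl⟩
          exact ⟨(hNmem x k).mp hk, hxP, (hmemP _).mpr ⟨k, rfl⟩⟩
      rw [himg, Finset.card_image_of_injective _ hinj]
    · intro x _ hx
      have hxP : x ∈ P := by simpa using hx
      rw [Finset.card_eq_zero, Finset.filter_eq_empty_iff]
      intro y _
      simp [hxP]
  have hS4 : (S.filter (fun q : V × V => ¬ q.1 ∈ P ∧ ¬ q.2 ∈ P)).card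
      = ∑ x ∈ Pᶜ, (B x).card := by
    have h0 : S.filter (fun q : V × V => ¬ q.1 ∈ P ∧ ¬ q.2 ∈ P)
        = Finset.univ.filter (fun q : V × V => G.Adj q.1 q.2 ∧ ¬ q.1 ∈ P ∧ ¬ q.2 ∈ P) := by
      rw [hSdef, Finset.filter_filter]
    rw [h0, ore_card_filter_prod (fun x y => G.Adj x y ∧ ¬ x ∈ P ∧ ¬ y ∈ P)]
    rw [← Finset.sum_subset (Finset.subset_univ Pᶜ) ?_]
    · apply Finset.sum_congr rfl
      intro x hx
      have hxP : ¬ x ∈ P := Finset.mem_compl.mp hx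
      congr 1
      ext y
      simp [hBdef, hxP]
    · intro x _ hx
      have hxP : x ∈ P := by simpa using hx
      rw [Finset.card_eq_zero, Finset.filter_eq_empty_iff]
      intro y _
      simp [hxP]
  have hBsub : ∀ x ∈ Pᶜ, B x ⊆ Pᶜ.erase x := by
    intro x hx y hy
    simp only [hBdef, Finset.mem_filter, Finset.mem_univ, true_and] at hy
    exact Finset.mem_erase.mpr ⟨hy.1.ne', Finset.mem_compl.mpr hy.2⟩
  have hBle : ∀ x ∈ Pᶜ, (B x).card ≤ m - 1 := by
    intro x hx
    have := Finset.card_le_card (hBsub x hx)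
    rwa [Finset.card_erase_of_mem hx, hOcard] at this
  have hStot : S.card = 2 * d + m * (m + 5) := by
    have hnd : n - d + 4 = m + 5 := by omega
    rw [hnd] at hsize
    have hdvd : 2 ∣ m * (m + 5) := by
      obtain ⟨t, ht⟩ := Nat.even_mul_succ_self m
      have hh : m * (m + 5) = m * (m + 1) + 4 * m := by ring
      omega
    obtain ⟨t, ht⟩ := hdvd
    rw [← h2E, hsize]
    omega
  have hsum_a_le : ∑ x ∈ Pᶜ, (N x).card ≤ 3 * m := by
    calc ∑ x ∈ Pᶜ, (N x).card ≤ ∑ _x ∈ Pᶜ, 3 :=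
          Finset.sum_le_sum (fun x _ => hNle3 x)
      _ = 3 * m := by rw [Finset.sum_const, hOcard, smul_eq_mul, mul_comm]
  have hsum_b_le : ∑ x ∈ Pᶜ, (B x).card ≤ m * (m - 1) := by
    calc ∑ x ∈ Pᶜ, (B x).card ≤ ∑ _x ∈ Pᶜ, (m - 1) := Finset.sum_le_sum hBle
      _ = m * (m - 1) := by rw [Finset.sum_const, hOcard, smul_eq_mul]
  have hmm : m * (m + 5) = 6 * m + m * (m - 1) := by
    cases m with
    | zero => rfl
    | succ k => simp only [Nat.succ_sub_one]; ring
  have hsuma : ∑ x ∈ Pᶜ, (N x).card = 3 * m ∧ ∑ x ∈ Pᶜ, (B x).card = m * (m - 1) := by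
    rw [hswap, hS1, hS3, hS4, hStot] at hsplit
    constructor <;> omega
  have hN3 : ∀ x ∈ Pᶜ, (N x).card = 3 := by
    have h3 : ∑ x ∈ Pᶜ, (N x).card = ∑ _x ∈ Pᶜ, 3 := by
      rw [hsuma.1, Finset.sum_const, hOcard, smul_eq_mul, mul_comm]
    exact fun x hx => (Finset.sum_eq_sum_iff_of_le (fun i _ => hNle3 i)).mp h3 x hx
  have hclique : ∀ x ∈ Pᶜ, ∀ y ∈ Pᶜ, y ≠ x → G.Adj x y := by
    have h3 : ∑ x ∈ Pᶜ, (B x).card = ∑ _x ∈ Pᶜ, (m - 1) := by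
      rw [hsuma.2, Finset.sum_const, hOcard, smul_eq_mul]
    have hBcard : ∀ x ∈ Pᶜ, (B x).card = m - 1 :=
      fun x hx => (Finset.sum_eq_sum_iff_of_le hBle).mp h3 x hx
    intro x hx y hy hne
    have heq : B x = Pᶜ.erase x := by
      apply Finset.eq_of_subset_of_card_le (hBsub x hx)
      rw [Finset.card_erase_of_mem hx, hOcard, hBcard x hx]
    have : y ∈ B x := by
      rw [heq]
      exact Finset.mem_erase.mpr ⟨hne, hy⟩
    simp only [hBdef, Finset.mem_filter] at this
    exact this.2.1
  -- assembly
  have hnotP : ∀ x : V, (∀ k, x ≠ v k) → x ∈ Pᶜ := by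
    intro x hx
    rw [Finset.mem_compl, hmemP]
    rintro ⟨k, hk⟩
    exact hx k hk.symm
  refine ⟨v, hinj, hadjP, ?_, ?_⟩
  · intro x y hx hy hne
    exact hclique x (hnotP x hx) y (hnotP y hy) hne.symm
  · rcases Finset.eq_empty_or_nonempty Pᶜ with hOe | hOne
    · refine ⟨0, Or.inl ⟨by omega, ?_⟩⟩
      intro x hx
      exact absurd (hnotP x hx) (by simp [hOe])
    · have hwinx : ∀ x, x ∈ Pᶜ → ∃ i : ℕ, i + 2 ≤ d ∧
          ∀ j : Fin (d+1), (j ∈ N x ↔ (j.val = i ∨ j.val = i + 1 ∨ j.val = i + 2)) :=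
        fun x hx => hwin x (hN3 x hx)
      choose st hst1 hst2 using hwinx
      have hclose : ∀ x (hx : x ∈ Pᶜ) y (hy : y ∈ Pᶜ), x ≠ y → st y hy ≤ st x hx + 1 := by
        intro x hx y hy hne
        set a := st x hx with ha
        set b := st y hy with hb
        rcases le_or_gt a (b + 2) with hcase | hcase
        swap
        · omega
        have hb2 : b + 2 ≤ d := hst1 y hy
        have ha2 : a + 2 ≤ d := hst1 x hx
        set ja : Fin (d+1) := ⟨a, by omega⟩ with hja
        set jb : Fin (d+1) := ⟨b + 2, by omega⟩ with hjb
        have hxa : G.Adj x (v ja) := (hNmem x ja).mp ((hst2 x hx ja).mpr (Or.inl rfl))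
        have hyb : G.Adj y (v jb) := (hNmem y jb).mp ((hst2 y hy jb).mpr
          (Or.inr (Or.inr rfl)))
        have hxy : G.Adj x y := hclique x hx y hy (fun h => hne h.symm)
        have t1 := hconn.dist_triangle (u := v ja) (v := x) (w := v jb)
        have t2 := hconn.dist_triangle (u := x) (v := y) (w := v jb)
        have e1 : G.dist (v ja) x = 1 := SimpleGraph.dist_eq_one_iff_adj.mpr hxa.symm
        have e2 : G.dist x y = 1 := SimpleGraph.dist_eq_one_iff_adj.mpr hxy
        have e3 : G.dist y (v jb) = 1 := SimpleGraph.dist_eq_one_iff_adj.mpr hyb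
        have hdd := hdv ja jb (by show a ≤ b + 2; omega)
        have hjav : (ja : ℕ) = a := rfl
        have hjbv : (jb : ℕ) = b + 2 := rfl
        rw [hjav, hjbv] at hdd
        omega
      obtain ⟨x0, hx0⟩ := hOne
      set i0 : ℕ := (Pᶜ.attach.image (fun x => st x.1 x.2)).min'
        (Finset.Nonempty.image ⟨⟨x0, hx0⟩, Finset.mem_attach _ _⟩ _) with hi0
      have hi0mem : ∃ y, ∃ (hy : y ∈ Pᶜ), st y hy = i0 := by
        have := Finset.min'_mem (Pᶜ.attach.image (fun x => st x.1 x.2))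
          (Finset.Nonempty.image ⟨⟨x0, hx0⟩, Finset.mem_attach _ _⟩ _)
        rw [Finset.mem_image] at this
        obtain ⟨y, -, hy⟩ := this
        exact ⟨y.1, y.2, hy⟩
      have hi0le : ∀ x (hx : x ∈ Pᶜ), i0 ≤ st x hx := by
        intro x hx
        apply Finset.min'_le
        exact Finset.mem_image.mpr ⟨⟨x, hx⟩, Finset.mem_attach _ _, rfl⟩
      have hrange : ∀ x (hx : x ∈ Pᶜ), st x hx = i0 ∨ st x hx = i0 + 1 := by
        intro x hx
        obtain ⟨y, hy, hys⟩ := hi0mem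
        by_cases hxy : x = y
        · subst hxy
          left
          exact hys
        · have := hclose y hy x hx (fun h => hxy h.symm)
          have := hi0le x hx
          omega
      by_cases hall : ∀ x (hx : x ∈ Pᶜ), st x hx = i0
      · refine ⟨i0, Or.inl ⟨?_, ?_⟩⟩
        · have := hst1 x0 hx0
          rw [hall x0 hx0] at this
          exact this
        · intro x hx j
          have hx' := hnotP x hx
          rw [← hNmem x j, hst2 x hx' j, hall x hx']
      · push_neg at hall
        obtain ⟨y, hy, hys⟩ := hall
        have hys' : st y hy = i0 + 1 := by
          rcases hrange y hy with h | h
          · exact absurd h hys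
          · exact h
        refine ⟨i0, Or.inr ⟨?_, ?_⟩⟩
        · have := hst1 y hy
          rw [hys'] at this
          omega
        · intro x hx
          have hx' := hnotP x hx
          rcases hrange x hx' with h | h
          · left
            intro j
            rw [← hNmem x j, hst2 x hx' j, h]
          · right
            intro j
            rw [← hNmem x j, hst2 x hx' j, h]
end

section
/- Let d ≥ 2 and n ≥ d + 1 be integers, let P be a path with d+1 vertices v_0, v_1, ..., v_d, and let G be the graph obtained from P by adding n - d - 1 new vertices that are pairwise adjacent, where for some fixed index i with 0 ≤ i ≤ d - 3 each new vertex is adjacent either to v_i, v_{i+1}, v_{i+2} or to v_{i+1}, v_{i+2}, v_{i+3} (and to no other vertices of P). Then G has n vertices, diameter exactly d, and exactly d + (n - d - 1)(n - d + 4)/2 edges. -/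
/-!
Each off-path vertex `u` sees the three consecutive path vertices centred at `v (c u)`, with
`c u ∈ {i + 1, i + 2}`. Since `1 ≤ c u ≤ d - 1`, every vertex is within distance `d` of every
other. Conversely the potential `v j ↦ j`, `u ↦ c u` changes by at most one along each edge, so
`v 0` and `v d` are at distance `d`. For the size, the path contributes `2 d` to the degree sum,
and each of the `m = n - d - 1` off-path vertices has `3` neighbours on the path and `m - 1` off
it, so `2 |E| = 2 d + 2 · 3 m + m (m - 1) = 2 d + m (m + 5)`.
-/

open Finset

namespace SimpleGraph

variable {V : Type*} {G : SimpleGraph V}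

theorem Walk.le_add_length_of_adj_le {f : V → ℕ} (hf : ∀ a b, G.Adj a b → f b ≤ f a + 1)
    {a b : V} (p : G.Walk a b) : f b ≤ f a + p.length := by
  induction p with
  | nil => simp
  | cons h _ ih => have := hf _ _ h; rw [Walk.length_cons]; omega

theorem le_add_edist_of_adj_le {f : V → ℕ} (hf : ∀ a b, G.Adj a b → f b ≤ f a + 1)
    (a b : V) : (f b : ℕ∞) ≤ f a + G.edist a b := by
  by_cases hr : G.Reachable a b
  · obtain ⟨p, hp⟩ := hr.exists_walk_length_eq_edist
    rw [← hp]
    exact_mod_cast p.le_add_length_of_adj_le hf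
  · simp [edist_eq_top_of_not_reachable hr]

theorem edist_le_sub_of_adj_succ {d : ℕ} {v : Fin (d + 1) → V}
    (hv : ∀ j k : Fin (d + 1), j.val + 1 = k.val → G.Adj (v j) (v k))
    {j k : Fin (d + 1)} (hjk : j ≤ k) : G.edist (v j) (v k) ≤ (k.val - j.val : ℕ) := by
  obtain ⟨t, ht⟩ := Nat.exists_eq_add_of_le (Fin.le_def.mp hjk)
  induction t generalizing k with
  | zero => simp [Fin.ext ht]
  | succ t ih =>
    let k' : Fin (d + 1) := ⟨j.val + t, by omega⟩
    calc G.edist (v j) (v k) ≤ G.edist (v j) (v k') + G.edist (v k') (v k) := G.edist_triangle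
      _ ≤ t + 1 := by
        gcongr
        · simpa [k'] using ih (k := k') (Fin.le_def.mpr (by simp [k'])) rfl
        · exact (edist_eq_one_iff_adj.mpr (hv k' k (by simp [k']; omega))).le
      _ = (k.val - j.val : ℕ) := by simp [ht]

theorem card_edgeFinset_pathGraph (n : ℕ) [DecidableRel (pathGraph (n + 1)).Adj] :
    #(pathGraph (n + 1)).edgeFinset = n := by
  have : (pathGraph (n + 1)).edgeFinset = univ.image fun j : Fin n => s(j.castSucc, j.succ) := by
    ext e
    induction e using Sym2.ind with
    | h a b =>
      simp only [mem_edgeFinset, mem_edgeSet, pathGraph_adj, mem_image, mem_univ, true_and]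
      constructor
      · rintro (h | h)
        · exact ⟨⟨a, by omega⟩, Sym2.eq_iff.mpr (.inl ⟨rfl, Fin.ext (by simp [h])⟩)⟩
        · exact ⟨⟨b, by omega⟩, Sym2.eq_iff.mpr (.inr ⟨rfl, Fin.ext (by simp [h])⟩)⟩
      · rintro ⟨j, hj⟩
        rcases Sym2.eq_iff.mp hj with ⟨rfl, rfl⟩ | ⟨rfl, rfl⟩ <;> simp
  rw [this, card_image_of_injective, card_univ, Fintype.card_fin]
  intro j k h
  rcases Sym2.eq_iff.mp h with ⟨h, -⟩ | ⟨h₁, h₂⟩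
  · exact Fin.castSucc_injective _ h
  · simp only [Fin.ext_iff, Fin.val_succ, Fin.val_castSucc] at h₁ h₂; omega

theorem degree_eq_card_adj_add_card_adj_compl [Fintype V] [DecidableEq V] [DecidableRel G.Adj]
    {ι : Type*} [Fintype ι] {v : ι → V} (hv : Function.Injective v) (a : V) :
    G.degree a = #{j | G.Adj a (v j)} + #{b ∈ (univ.image v)ᶜ | G.Adj a b} := by
  have hrange : #{b ∈ univ.image v | G.Adj a b} = #{j | G.Adj a (v j)} := by
    rw [filter_image, card_image_of_injective _ hv]
  rw [← hrange, ← card_neighborFinset_eq_degree,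
    ← card_filter_add_card_filter_not (s := G.neighborFinset a) (· ∈ univ.image v)]
  congr 2 <;> ext b <;> simp [and_comm]

/-- The path `v 0 - ⋯ - v d` plus a clique on the other vertices, where `c u` is the centre of the
three consecutive path vertices seen by an off-path vertex `u`. -/
structure IsPathCliqueGraph (G : SimpleGraph V) {d : ℕ} (v : Fin (d + 1) → V) (c : V → ℕ) :
    Prop where
  injective : Function.Injective v
  adj_path : ∀ j k, G.Adj (v j) (v k) ↔ (pathGraph (d + 1)).Adj j k
  adj_clique : ∀ u w, u ∉ Set.range v → w ∉ Set.range v → u ≠ w → G.Adj u w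
  adj_center : ∀ u ∉ Set.range v, ∀ j : Fin (d + 1),
    G.Adj u (v j) ↔ (j.val + 1 = c u ∨ j.val = c u ∨ j.val = c u + 1)

namespace IsPathCliqueGraph

variable {d : ℕ} {v : Fin (d + 1) → V} {c : V → ℕ}

theorem edist_le (hG : G.IsPathCliqueGraph v c) (j k : Fin (d + 1)) :
    G.edist (v j) (v k) ≤ (j.val - k.val + (k.val - j.val) : ℕ) := by
  have hv : ∀ j k : Fin (d + 1), j.val + 1 = k.val → G.Adj (v j) (v k) :=
    fun j k h => (hG.adj_path j k).mpr (pathGraph_adj.mpr (.inl h))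
  rcases le_total j k with h | h
  · simpa [Nat.sub_eq_zero_of_le (Fin.le_def.mp h)] using edist_le_sub_of_adj_succ hv h
  · rw [edist_comm]
    simpa [Nat.sub_eq_zero_of_le (Fin.le_def.mp h)] using edist_le_sub_of_adj_succ hv h

theorem edist_le_of_notMem_range (hG : G.IsPathCliqueGraph v c) {u : V} (hu : u ∉ Set.range v)
    (hcu : 1 ≤ c u ∧ c u < d) (j : Fin (d + 1)) : G.edist (v j) u ≤ d := by
  let m : Fin (d + 1) := ⟨c u, by omega⟩
  have hm : G.Adj (v m) u := ((hG.adj_center u hu m).mpr (.inr (.inl rfl))).symm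
  calc G.edist (v j) u ≤ G.edist (v j) (v m) + G.edist (v m) u := G.edist_triangle
    _ ≤ (j.val - c u + (c u - j.val) : ℕ) + 1 :=
      add_le_add (hG.edist_le j m) (edist_eq_one_iff_adj.mpr hm).le
    _ ≤ d := by have := j.isLt; norm_cast; omega

theorem ediam_le (hG : G.IsPathCliqueGraph v c) (hc : ∀ u ∉ Set.range v, 1 ≤ c u ∧ c u < d) :
    G.ediam ≤ d := by
  refine ediam_le_of_edist_le fun a b => ?_
  by_cases ha : a ∈ Set.range v <;> by_cases hb : b ∈ Set.range v
  · obtain ⟨j, rfl⟩ := ha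
    obtain ⟨k, rfl⟩ := hb
    refine (hG.edist_le j k).trans ?_
    have := j.isLt; have := k.isLt
    norm_cast; omega
  · obtain ⟨j, rfl⟩ := ha
    exact hG.edist_le_of_notMem_range hb (hc b hb) j
  · obtain ⟨k, rfl⟩ := hb
    exact edist_comm (G := G) ▸ hG.edist_le_of_notMem_range ha (hc a ha) k
  · rcases eq_or_ne a b with rfl | hab
    · simp
    · rw [edist_eq_one_iff_adj.mpr (hG.adj_clique a b ha hb hab)]
      exact_mod_cast (hc a ha).1.trans (hc a ha).2.le

open Classical in
noncomputable def level (v : Fin (d + 1) → V) (c : V → ℕ) (u : V) : ℕ :=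
  if u ∈ Set.range v then (Function.invFun v u).val else c u

theorem level_apply (hG : G.IsPathCliqueGraph v c) (j : Fin (d + 1)) : level v c (v j) = j := by
  rw [level, if_pos (Set.mem_range_self j), Function.leftInverse_invFun hG.injective j]

theorem level_of_notMem_range {u : V} (hu : u ∉ Set.range v) : level v c u = c u := by
  rw [level, if_neg hu]

theorem level_le_level_add_one_of_adj (hG : G.IsPathCliqueGraph v c)
    (hc : ∀ u ∉ Set.range v, ∀ w ∉ Set.range v, c u ≤ c w + 1) {a b : V} (hab : G.Adj a b) :
    level v c b ≤ level v c a + 1 := by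
  by_cases ha : a ∈ Set.range v <;> by_cases hb : b ∈ Set.range v
  · obtain ⟨j, rfl⟩ := ha
    obtain ⟨k, rfl⟩ := hb
    have := pathGraph_adj.mp ((hG.adj_path j k).mp hab)
    rw [hG.level_apply, hG.level_apply]; omega
  · obtain ⟨j, rfl⟩ := ha
    have := (hG.adj_center b hb j).mp hab.symm
    rw [hG.level_apply, level_of_notMem_range hb]; omega
  · obtain ⟨k, rfl⟩ := hb
    have := (hG.adj_center a ha k).mp hab
    rw [hG.level_apply, level_of_notMem_range ha]; omega
  · rw [level_of_notMem_range ha, level_of_notMem_range hb]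
    exact hc b hb a ha

theorem le_edist_zero_last (hG : G.IsPathCliqueGraph v c)
    (hc : ∀ u ∉ Set.range v, ∀ w ∉ Set.range v, c u ≤ c w + 1) :
    d ≤ G.edist (v 0) (v (Fin.last d)) := by
  have := le_add_edist_of_adj_le (fun a b => hG.level_le_level_add_one_of_adj hc) (v 0)
    (v (Fin.last d))
  simpa [hG.level_apply] using this

theorem connected [Nonempty V] (hG : G.IsPathCliqueGraph v c)
    (hc : ∀ u ∉ Set.range v, 1 ≤ c u ∧ c u < d) : G.Connected :=
  connected_of_ediam_ne_top (ne_top_of_le_ne_top (ENat.natCast_ne_top d) (hG.ediam_le hc))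

theorem diam_eq (hG : G.IsPathCliqueGraph v c) (hc : ∀ u ∉ Set.range v, 1 ≤ c u ∧ c u < d)
    (hc' : ∀ u ∉ Set.range v, ∀ w ∉ Set.range v, c u ≤ c w + 1) : G.diam = d := by
  rw [diam, (hG.ediam_le hc).antisymm ((hG.le_edist_zero_last hc').trans edist_le_ediam),
    ENat.toNat_natCast]

section EdgeCount

variable [DecidableRel G.Adj]

theorem sum_card_adj_path (hG : G.IsPathCliqueGraph v c) :
    ∑ j, #{k | G.Adj (v j) (v k)} = 2 * d := by
  classical
  have hdeg : ∀ j, #{k | G.Adj (v j) (v k)} = (pathGraph (d + 1)).degree j := fun j => by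
    rw [← card_neighborFinset_eq_degree, neighborFinset_eq_filter]
    exact congrArg card (filter_congr fun k _ => hG.adj_path j k)
  simp only [hdeg, sum_degrees_eq_twice_card_edges, card_edgeFinset_pathGraph]

theorem card_adj_path_of_notMem_range (hG : G.IsPathCliqueGraph v c) {u : V}
    (hu : u ∉ Set.range v) (hcu : 1 ≤ c u ∧ c u < d) : #{j | G.Adj u (v j)} = 3 := by
  have : ({j | G.Adj u (v j)} : Finset (Fin (d + 1))) =
      {⟨c u - 1, by omega⟩, ⟨c u, by omega⟩, ⟨c u + 1, by omega⟩} := by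
    ext j
    simp only [mem_filter, mem_univ, true_and, hG.adj_center u hu, mem_insert, mem_singleton,
      Fin.ext_iff]
    omega
  rw [this, card_insert_of_notMem, card_pair] <;> simp [Fin.ext_iff]; omega

theorem card_adj_new_of_notMem_range [Fintype V] [DecidableEq V]
    (hG : G.IsPathCliqueGraph v c) {u : V} (hu : u ∉ Set.range v) : #{b ∈ (univ.image v)ᶜ | G.Adj u b} = #(univ.image v)ᶜ - 1 := by
  have hmem : ∀ b, b ∈ (univ.image v)ᶜ ↔ b ∉ Set.range v := by simp
  rw [← card_erase_of_mem ((hmem u).mpr hu)]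
  congr 1
  ext b
  simp only [mem_filter, mem_erase, hmem]
  exact ⟨fun ⟨hb, hub⟩ => ⟨hub.ne', hb⟩, fun ⟨hbu, hb⟩ => ⟨hb, hG.adj_clique u b hu hb hbu.symm⟩⟩

theorem two_mul_card_edgeFinset [Fintype V] [DecidableEq V] (hG : G.IsPathCliqueGraph v c)
    (hc : ∀ u ∉ Set.range v, 1 ≤ c u ∧ c u < d) :
    2 * #G.edgeFinset = 2 * d + #(univ.image v)ᶜ * (#(univ.image v)ᶜ + 5) := by
  have hS : ∀ u ∈ (univ.image v)ᶜ, u ∉ Set.range v := by simp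
  have hcross : ∑ j, #{b ∈ (univ.image v)ᶜ | G.Adj (v j) b} =
      ∑ u ∈ (univ.image v)ᶜ, #{j | G.Adj u (v j)} := by
    simp_rw [G.adj_comm _ (v _)]
    exact sum_card_bipartiteAbove_eq_sum_card_bipartiteBelow (fun j b => G.Adj (v j) b)
  rw [← sum_degrees_eq_twice_card_edges, ← sum_add_sum_compl (univ.image v),
    sum_image hG.injective.injOn]
  simp only [degree_eq_card_adj_add_card_adj_compl hG.injective, sum_add_distrib, hcross,
    hG.sum_card_adj_path]
  rw [sum_congr rfl fun u hu => hG.card_adj_path_of_notMem_range (hS u hu) (hc u (hS u hu)),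
    sum_congr rfl fun u hu => hG.card_adj_new_of_notMem_range (hS u hu), sum_const, sum_const,
    smul_eq_mul, smul_eq_mul]
  rcases #(univ.image v)ᶜ with _ | m
  · rfl
  · simp only [Nat.add_sub_cancel]; ring

theorem card_edgeFinset [Fintype V] (hG : G.IsPathCliqueGraph v c)
    (hc : ∀ u ∉ Set.range v, 1 ≤ c u ∧ c u < d) :
    #G.edgeFinset = d + (Fintype.card V - d - 1) * (Fintype.card V - d + 4) / 2 := by
  classical
  have hn : d + 1 ≤ Fintype.card V := by
    simpa using Fintype.card_le_of_injective v hG.injective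
  have hm : #(univ.image v)ᶜ = Fintype.card V - d - 1 := by
    rw [card_compl, card_image_of_injective _ hG.injective, card_univ, Fintype.card_fin]; omega
  have hedges := hG.two_mul_card_edgeFinset hc
  rw [hm, show Fintype.card V - d - 1 + 5 = Fintype.card V - d + 4 by omega] at hedges
  omega

end EdgeCount

end IsPathCliqueGraph

end SimpleGraph

theorem ore_extremal_construction_general {V : Type*} [Fintype V] (G : SimpleGraph V)
    [DecidableRel G.Adj] (n d i : ℕ) (hi : i + 3 ≤ d)
    (hcardV : Fintype.card V = n)
    (v : Fin (d + 1) → V) (hinj : Function.Injective v)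
    -- the edges among the vertices of `P` are exactly the `d` edges of the path
    (hP : ∀ j k : Fin (d + 1), G.Adj (v j) (v k) ↔ (j.val + 1 = k.val ∨ k.val + 1 = j.val))
    -- the new vertices are pairwise adjacent
    (hclique : ∀ u w : V, (∀ k, u ≠ v k) → (∀ k, w ≠ v k) → u ≠ w → G.Adj u w)
    -- each new vertex is adjacent exactly to `v i, v (i+1), v (i+2)` or exactly to
    -- `v (i+1), v (i+2), v (i+3)` among the vertices of `P`
    (hS : ∀ u : V, (∀ k, u ≠ v k) →
      ((∀ j : Fin (d + 1), G.Adj u (v j) ↔ (j.val = i ∨ j.val = i + 1 ∨ j.val = i + 2)) ∨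
       (∀ j : Fin (d + 1),
          G.Adj u (v j) ↔ (j.val = i + 1 ∨ j.val = i + 2 ∨ j.val = i + 3)))) :
    Fintype.card V = n ∧ G.Connected ∧ G.diam = d ∧
      G.edgeFinset.card = d + (n - d - 1) * (n - d + 4) / 2 := by
  classical
  have hnew : ∀ u, u ∉ Set.range v ↔ ∀ k, u ≠ v k := by simp [eq_comm]
  have hcenter : ∀ u, ∃ m, u ∉ Set.range v → (m = i + 1 ∨ m = i + 2) ∧
      ∀ j : Fin (d + 1), G.Adj u (v j) ↔ (j.val + 1 = m ∨ j.val = m ∨ j.val = m + 1) := by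
    intro u
    by_cases hu : u ∈ Set.range v
    · exact ⟨0, fun h => absurd hu h⟩
    rcases hS u ((hnew u).mp hu) with h | h
    · exact ⟨i + 1, fun _ => ⟨.inl rfl, fun j => (h j).trans (by omega)⟩⟩
    · exact ⟨i + 2, fun _ => ⟨.inr rfl, fun j => (h j).trans (by omega)⟩⟩
  choose c hc using hcenter
  have hG : G.IsPathCliqueGraph v c :=
    ⟨hinj, fun j k => (hP j k).trans SimpleGraph.pathGraph_adj.symm,
      fun u w hu hw => hclique u w ((hnew u).mp hu) ((hnew w).mp hw), fun u hu => (hc u hu).2⟩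
  have hcd : ∀ u ∉ Set.range v, 1 ≤ c u ∧ c u < d := fun u hu => by
    have := (hc u hu).1; omega
  have : Nonempty V := ⟨v 0⟩
  refine ⟨hcardV, hG.connected hcd, hG.diam_eq hcd fun u hu w hw => ?_,
    hcardV ▸ hG.card_edgeFinset hcd⟩
  have := (hc u hu).1; have := (hc w hw).1; omega

/-- Let `d ≥ 2` and `n ≥ d + 1` be integers, let `P` be a path with `d + 1` vertices
`v 0, v 1, ..., v d`, and let `G` be the graph obtained from `P` by adding `n - d - 1`
new vertices that are pairwise adjacent, where for some fixed index `i` with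
`0 ≤ i ≤ d - 3` (i.e. `i + 3 ≤ d`) each new vertex is adjacent either to
`v i, v (i+1), v (i+2)` or to `v (i+1), v (i+2), v (i+3)` (and to no other vertices
of `P`). Then `G` has `n` vertices, diameter exactly `d`, and exactly
`d + (n - d - 1)(n - d + 4)/2` edges. -/
theorem ore_extremal_construction {V : Type*} [Fintype V] (G : SimpleGraph V)
    [DecidableRel G.Adj] (n d i : ℕ) (hd : 2 ≤ d) (hn : d + 1 ≤ n) (hi : i + 3 ≤ d)
    (hcardV : Fintype.card V = n)
    (v : Fin (d + 1) → V) (hinj : Function.Injective v)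
    -- the edges among the vertices of `P` are exactly the `d` edges of the path
    (hP : ∀ j k : Fin (d + 1), G.Adj (v j) (v k) ↔ (j.val + 1 = k.val ∨ k.val + 1 = j.val))
    -- the new vertices are pairwise adjacent
    (hclique : ∀ u w : V, (∀ k, u ≠ v k) → (∀ k, w ≠ v k) → u ≠ w → G.Adj u w)
    -- each new vertex is adjacent exactly to `v i, v (i+1), v (i+2)` or exactly to
    -- `v (i+1), v (i+2), v (i+3)` among the vertices of `P`
    (hS : ∀ u : V, (∀ k, u ≠ v k) →
      ((∀ j : Fin (d + 1), G.Adj u (v j) ↔ (j.val = i ∨ j.val = i + 1 ∨ j.val = i + 2)) ∨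
       (∀ j : Fin (d + 1),
          G.Adj u (v j) ↔ (j.val = i + 1 ∨ j.val = i + 2 ∨ j.val = i + 3)))) :
    Fintype.card V = n ∧ G.Connected ∧ G.diam = d ∧
      G.edgeFinset.card = d + (n - d - 1) * (n - d + 4) / 2 :=
  ore_extremal_construction_general G n d i hi hcardV v hinj hP hclique hS
end

section
/- Let G be a finite simple graph on n vertices with diameter exactly d ≥ 2, let x and y be vertices at distance d, let P be an (x,y)-path of length d, and let S be the set of the n - d - 1 vertices of G not on P. Then the number of edges of G satisfies |E(G)| ≤ d + 3(n - d - 1) + (n - d - 1)(n - d - 2)/2, where the three summands bound respectively the edges of P together with all other edges between vertices of P, the edges between S and P, and the edges inside S. -/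
/-!
Along a shortest path `v 0, …, v d` we have `dist (v i) (v j) = j - i`. Hence two vertices of the
path are adjacent only if they are consecutive, so the path spans just its own `d` edges; and if a
vertex `u` is adjacent to `v i` and `v j`, then `j - i = dist (v i) (v j) ≤ 2`, so `u` has at most
three neighbours on the path. The vertices off the path span at most `(n - d - 1).choose 2` edges.
-/

open Set

lemma Set.ncard_le_of_forall_sub_le {s : Set ℕ} {k : ℕ}
    (h : ∀ a ∈ s, ∀ b ∈ s, a ≤ b → b - a ≤ k) : s.ncard ≤ k + 1 := by
  rcases s.eq_empty_or_nonempty with rfl | hs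
  · simp
  have hsub : s ⊆ Icc (sInf s) (sInf s + k) := fun b hb =>
    ⟨Nat.sInf_le hb, by have := h _ (Nat.sInf_mem hs) b hb (Nat.sInf_le hb); omega⟩
  have := ncard_le_ncard hsub
  rw [ncard_Icc_nat] at this
  omega

namespace SimpleGraph

variable {V : Type*} {G : SimpleGraph V}

lemma reachable_of_adj_succ {d : ℕ} {v : Fin (d + 1) → V}
    (hv : ∀ i : Fin d, G.Adj (v i.castSucc) (v i.succ)) (i j : Fin (d + 1)) :
    G.Reachable (v i) (v j) := by
  have h0 : ∀ k, G.Reachable (v 0) (v k) :=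
    Fin.induction .rfl fun k hk => hk.trans (hv k).reachable
  exact (h0 i).symm.trans (h0 j)

lemma dist_le_sub_of_adj_succ {d : ℕ} {v : Fin (d + 1) → V}
    (hv : ∀ i : Fin d, G.Adj (v i.castSucc) (v i.succ)) {i j : Fin (d + 1)} (hij : i ≤ j) :
    G.dist (v i) (v j) ≤ j - i := by
  induction j using Fin.induction with
  | zero => simp [nonpos_iff_eq_zero.mp hij]
  | succ j ih =>
    rcases hij.eq_or_lt with rfl | hlt
    · simp
    · have hle : (i : ℕ) ≤ j := Fin.le_castSucc_iff.mpr hlt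
      have hprev := ih (Fin.le_castSucc_iff.mpr hlt)
      have hstep := (hv j).reachable.dist_triangle_right (v i)
      rw [dist_eq_one_iff_adj.mpr (hv j)] at hstep
      simp only [Fin.val_castSucc, Fin.val_succ] at hprev ⊢
      omega

structure IsGeodesic (G : SimpleGraph V) {d : ℕ} (v : Fin (d + 1) → V) : Prop where
  adj_succ : ∀ i : Fin d, G.Adj (v i.castSucc) (v i.succ)
  dist_ends : G.dist (v 0) (v (Fin.last d)) = d

namespace IsGeodesic

variable {d : ℕ} {v : Fin (d + 1) → V}

lemma dist_eq (hv : G.IsGeodesic v) {i j : Fin (d + 1)} (hij : i ≤ j) :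
    G.dist (v i) (v j) = j - i := by
  have hreach := reachable_of_adj_succ hv.adj_succ
  have hupper := dist_le_sub_of_adj_succ hv.adj_succ hij
  have hlower : d ≤ i + (G.dist (v i) (v j) + (d - j)) := calc
    d = G.dist (v 0) (v (Fin.last d)) := hv.dist_ends.symm
    _ ≤ G.dist (v 0) (v i) + (G.dist (v i) (v j) + G.dist (v j) (v (Fin.last d))) :=
      ((hreach 0 i).dist_triangle_left _).trans <|
        Nat.add_le_add_left ((hreach i j).dist_triangle_left _) _
    _ ≤ i + (G.dist (v i) (v j) + (d - j)) := by
      gcongr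
      · simpa using dist_le_sub_of_adj_succ hv.adj_succ (Fin.zero_le i)
      · simpa using dist_le_sub_of_adj_succ hv.adj_succ (Fin.le_last j)
  have := j.is_le
  omega

lemma succ_of_adj (hv : G.IsGeodesic v) {i j : Fin (d + 1)} (hij : i < j)
    (hadj : G.Adj (v i) (v j)) : (j : ℕ) = i + 1 := by
  have := hv.dist_eq hij.le
  rw [dist_eq_one_iff_adj.mpr hadj] at this
  have : (i : ℕ) < j := hij
  omega

lemma exists_eq_edge_of_adj (hv : G.IsGeodesic v) {i j : Fin (d + 1)}
    (hadj : G.Adj (v i) (v j)) : ∃ k : Fin d, s(v k.castSucc, v k.succ) = s(v i, v j) := by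
  wlog hij : i < j generalizing i j
  · obtain ⟨k, hk⟩ := this hadj.symm <| (not_lt.mp hij).lt_of_ne fun h => hadj.ne (by rw [h])
    exact ⟨k, hk.trans Sym2.eq_swap⟩
  have hj := hv.succ_of_adj hij hadj
  obtain ⟨k, rfl⟩ := Fin.exists_castSucc_eq.mpr (Fin.ne_last_of_lt hij)
  exact ⟨k, by rw [show k.succ = j from Fin.ext (by simp [hj])]⟩

lemma sub_le_two_of_adj_of_adj (hv : G.IsGeodesic v) {u : V} {i j : Fin (d + 1)} (hij : i ≤ j)
    (hi : G.Adj u (v i)) (hj : G.Adj u (v j)) : (j : ℕ) - i ≤ 2 := by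
  have := hj.reachable.dist_triangle_right (v i)
  rw [hv.dist_eq hij, dist_eq_one_iff_adj.mpr hi.symm, dist_eq_one_iff_adj.mpr hj] at this
  exact this

lemma ncard_adj_le_three (hv : G.IsGeodesic v) (u : V) :
    {r ∈ range v | G.Adj u r}.ncard ≤ 3 := by
  have hrange : {r ∈ range v | G.Adj u r} = v '' {i | G.Adj u (v i)} :=
    image_preimage_eq_range_inter.symm
  calc {r ∈ range v | G.Adj u r}.ncard
      ≤ {i | G.Adj u (v i)}.ncard := hrange ▸ ncard_image_le
    _ = ((↑) '' {i | G.Adj u (v i)} : Set ℕ).ncard := (ncard_image_of_injective _ Fin.val_injective).symm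
    _ ≤ 3 := by
      refine ncard_le_of_forall_sub_le ?_
      rintro _ ⟨i, hi, rfl⟩ _ ⟨j, hj, rfl⟩ hij
      exact hv.sub_le_two_of_adj_of_adj hij hi hj

lemma ncard_edges_within_range_le (hv : G.IsGeodesic v) :
    {e ∈ G.edgeSet | ∀ z ∈ e, z ∈ range v}.ncard ≤ d := by
  have hsub : {e ∈ G.edgeSet | ∀ z ∈ e, z ∈ range v} ⊆
      range fun k : Fin d => s(v k.castSucc, v k.succ) := by
    rintro e ⟨he, hev⟩
    induction e using Sym2.ind with | _ a b =>
    obtain ⟨i, rfl⟩ := hev a (Sym2.mem_mk_left a b)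
    obtain ⟨j, rfl⟩ := hev b (Sym2.mem_mk_right _ b)
    exact hv.exists_eq_edge_of_adj he
  calc _ ≤ (range fun k : Fin d => s(v k.castSucc, v k.succ)).ncard := ncard_le_ncard hsub
    _ ≤ d := by
      rw [← image_univ]
      exact le_trans ncard_image_le (by simp)

end IsGeodesic

lemma ncard_crossing_edges_le [Finite V] (R : Set V) {k : ℕ}
    (h : ∀ u ∉ R, {r ∈ R | G.Adj u r}.ncard ≤ k) :
    {e ∈ G.edgeSet | (∃ z ∈ e, z ∈ R) ∧ ∃ z ∈ e, z ∉ R}.ncard ≤ k * Rᶜ.ncard := by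
  classical
  have := Fintype.ofFinite V
  have hsub : {e ∈ G.edgeSet | (∃ z ∈ e, z ∈ R) ∧ ∃ z ∈ e, z ∉ R} ⊆
      ⋃ u ∈ Rᶜ.toFinset, (fun r => s(u, r)) '' {r ∈ R | G.Adj u r} := by
    rintro e ⟨he, ⟨r, hre, hr⟩, ⟨u, hue, hu⟩⟩
    have hur : e = s(u, r) := (Sym2.mem_and_mem_iff (by rintro rfl; exact hu hr)).mp ⟨hue, hre⟩
    subst hur
    exact mem_biUnion (by simpa using hu) ⟨r, ⟨hr, he⟩, rfl⟩
  calc _ ≤ (⋃ u ∈ Rᶜ.toFinset, (fun r => s(u, r)) '' {r ∈ R | G.Adj u r}).ncard :=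
        ncard_le_ncard hsub
    _ ≤ ∑ u ∈ Rᶜ.toFinset, ((fun r => s(u, r)) '' {r ∈ R | G.Adj u r}).ncard :=
        Finset.set_ncard_biUnion_le _ _
    _ ≤ ∑ _u ∈ Rᶜ.toFinset, k :=
        Finset.sum_le_sum fun u hu => le_trans ncard_image_le (h u (by simpa using hu))
    _ = k * Rᶜ.ncard := by rw [Finset.sum_const, smul_eq_mul, mul_comm, ncard_eq_toFinset_card']

lemma ncard_edges_within_le [Finite V] (s : Set V) :
    {e ∈ G.edgeSet | ∀ z ∈ e, z ∈ s}.ncard ≤ s.ncard.choose 2 := by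
  classical
  have := Fintype.ofFinite V
  have hsub : {e ∈ G.edgeSet | ∀ z ∈ e, z ∈ s} ⊆ s.toFinset.offDiag.image Sym2.mk.uncurry := by
    rintro e ⟨he, hes⟩
    induction e using Sym2.ind with | _ a b =>
    simp only [Finset.coe_image, Finset.coe_offDiag, coe_toFinset]
    exact ⟨(a, b), ⟨hes a (Sym2.mem_mk_left a b), hes b (Sym2.mem_mk_right a b), he.ne⟩, rfl⟩
  calc _ ≤ _ := ncard_le_ncard hsub
    _ = s.ncard.choose 2 := by
      rw [ncard_coe_finset, Sym2.card_image_offDiag, ncard_eq_toFinset_card']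

lemma ncard_edgeSet_eq_add [Finite V] (R : Set V) :
    G.edgeSet.ncard = {e ∈ G.edgeSet | ∀ z ∈ e, z ∈ R}.ncard +
      {e ∈ G.edgeSet | (∃ z ∈ e, z ∈ R) ∧ ∃ z ∈ e, z ∉ R}.ncard +
      {e ∈ G.edgeSet | ∀ z ∈ e, z ∉ R}.ncard := by
  have hpart : G.edgeSet = {e ∈ G.edgeSet | ∀ z ∈ e, z ∈ R} ∪
      {e ∈ G.edgeSet | (∃ z ∈ e, z ∈ R) ∧ ∃ z ∈ e, z ∉ R} ∪
      {e ∈ G.edgeSet | ∀ z ∈ e, z ∉ R} := by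
    ext e
    induction e using Sym2.ind with | _ a b =>
    simp only [mem_union, mem_ofPred_eq, Sym2.mem_iff, forall_eq_or_imp, forall_eq,
      exists_eq_or_imp, exists_eq_left]
    tauto
  conv_lhs => rw [hpart]
  rw [ncard_union_eq, ncard_union_eq]
  · refine Set.disjoint_left.mpr ?_
    rintro e ⟨-, hR⟩ ⟨-, -, ⟨z, hz, hzR⟩⟩
    exact hzR (hR z hz)
  · refine disjoint_union_left.mpr ⟨Set.disjoint_left.mpr ?_, Set.disjoint_left.mpr ?_⟩
    · rintro e ⟨-, hR⟩ ⟨-, hRc⟩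
      exact hRc _ (Sym2.out_fst_mem e) (hR _ (Sym2.out_fst_mem e))
    · rintro e ⟨-, ⟨z, hz, hzR⟩, -⟩ ⟨-, hRc⟩
      exact hRc z hz hzR

end SimpleGraph

open SimpleGraph in
theorem ore_edge_count_decomposition_general {V : Type*} [Fintype V] (G : SimpleGraph V)
    [DecidableRel G.Adj] (n d : ℕ)
    (hcard : Fintype.card V = n)
    (x y : V) (hdist : G.dist x y = d)
    (v : Fin (d + 1) → V) (hinj : Function.Injective v)
    (hx : v 0 = x) (hy : v (Fin.last d) = y)
    (hpath : ∀ i : Fin d, G.Adj (v i.castSucc) (v i.succ)) :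
    -- the edges of `P` together with all other edges between vertices of `P`
    {e ∈ G.edgeSet | ∀ z ∈ e, z ∈ Set.range v}.ncard ≤ d ∧
    -- the edges between `S` and `P`
    {e ∈ G.edgeSet | (∃ z ∈ e, z ∈ Set.range v) ∧ ∃ z ∈ e, z ∉ Set.range v}.ncard ≤
      3 * (n - d - 1) ∧
    -- the edges inside `S`
    {e ∈ G.edgeSet | ∀ z ∈ e, z ∉ Set.range v}.ncard ≤ (n - d - 1) * (n - d - 2) / 2 ∧
    -- the total bound
    G.edgeFinset.card ≤ d + 3 * (n - d - 1) + (n - d - 1) * (n - d - 2) / 2 := by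
  have hv : G.IsGeodesic v := ⟨hpath, by rw [hx, hy, hdist]⟩
  have hoff : (Set.range v)ᶜ.ncard = n - d - 1 := by
    rw [Set.ncard_compl, Set.ncard_range_of_injective hinj, Nat.card_eq_fintype_card, hcard,
      Nat.card_eq_fintype_card, Fintype.card_fin]
    omega
  have hP := hv.ncard_edges_within_range_le
  have hSP := G.ncard_crossing_edges_le (Set.range v) fun u _ => hv.ncard_adj_le_three u
  have hS : {e ∈ G.edgeSet | ∀ z ∈ e, z ∉ Set.range v}.ncard ≤ _ :=
    G.ncard_edges_within_le (Set.range v)ᶜ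
  rw [hoff] at hSP hS
  rw [Nat.choose_two_right, show n - d - 1 - 1 = n - d - 2 by omega] at hS
  refine ⟨hP, hSP, hS, ?_⟩
  rw [← Set.ncard_coe_finset, coe_edgeFinset, G.ncard_edgeSet_eq_add (Set.range v)]
  omega

/-- Let `G` be a finite simple graph on `n` vertices with diameter exactly `d ≥ 2`,
let `x` and `y` be vertices at distance `d`, let `P` be an `(x,y)`-path of length `d`
with vertices `v 0, ..., v d`, and let `S` be the set of the `n - d - 1` vertices of `G`
not on `P`. Then `|E(G)| ≤ d + 3(n - d - 1) + (n - d - 1)(n - d - 2)/2`, where the three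
summands bound respectively the edges of `P` together with all other edges between
vertices of `P`, the edges between `S` and `P`, and the edges inside `S`. -/
theorem ore_edge_count_decomposition {V : Type*} [Fintype V] (G : SimpleGraph V)
    [DecidableRel G.Adj] (n d : ℕ) (hd : 2 ≤ d)
    (hcard : Fintype.card V = n) (hconn : G.Connected) (hdiam : G.diam = d)
    (x y : V) (hdist : G.dist x y = d)
    (v : Fin (d + 1) → V) (hinj : Function.Injective v)
    (hx : v 0 = x) (hy : v (Fin.last d) = y)
    (hpath : ∀ i : Fin d, G.Adj (v i.castSucc) (v i.succ)) :
    -- the edges of `P` together with all other edges between vertices of `P`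
    {e ∈ G.edgeSet | ∀ z ∈ e, z ∈ Set.range v}.ncard ≤ d ∧
    -- the edges between `S` and `P`
    {e ∈ G.edgeSet | (∃ z ∈ e, z ∈ Set.range v) ∧ ∃ z ∈ e, z ∉ Set.range v}.ncard ≤
      3 * (n - d - 1) ∧
    -- the edges inside `S`
    {e ∈ G.edgeSet | ∀ z ∈ e, z ∉ Set.range v}.ncard ≤ (n - d - 1) * (n - d - 2) / 2 ∧
    -- the total bound
    G.edgeFinset.card ≤ d + 3 * (n - d - 1) + (n - d - 1) * (n - d - 2) / 2 :=
  ore_edge_count_decomposition_general G n d hcard x y hdist v hinj hx hy hpath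
end
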